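/- arXiv:2010.08869 — 6 statements merged into one kernel-verified Lean document; each statement's English description precedes it below -/
import Mathlib

section
/- In a scoped RPP, no CAE triple affects both a relevant fluent (in J_rel) and a causally-linked fluent (in J_CL): if a CAE triple's effect on some fluent in J_rel is not the identity, then its effect on every fluent in J_CL is the identity. -/
abbrev PState (𝒥 : Type*) (S : 𝒥 → Type*) := (j : 𝒥) → S j

structure CAE (𝒥 : Type*) (S : 𝒥 → Type*) where
  pre : PState 𝒥 S → Prop
  eff : (j : 𝒥) → S j → S j

/-- A CAE triple affects fluent `j` if its effect function on `j` is not the identity. -/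
def Affects {𝒥 : Type*} {S : 𝒥 → Type*} (x : CAE 𝒥 S) (j : 𝒥) : Prop :=
  x.eff j ≠ id

/-- Side effects of the transition system reduced to `Jrel`: fluents outside `Jrel`
affected by some concrete CAE triple that affects some fluent of `Jrel`. -/
def sideEffects {𝒥 : Type*} {S : 𝒥 → Type*} (T : Set (CAE 𝒥 S)) (Jrel : Set 𝒥) : Set 𝒥 :=
  {j | j ∉ Jrel ∧ ∃ x ∈ T, (∃ j' ∈ Jrel, Affects x j') ∧ Affects x j}

/-- In a scoped RPP (causally-linked fluents are disjoint from the relevant fluents and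
from the side effects of the reduced transition system), no CAE triple affects both a
relevant fluent and a causally-linked fluent: if a triple's effect on some fluent in
`Jrel` is not the identity, its effect on every fluent in `JCL` is the identity. -/
theorem no_triple_affects_rel_and_CL {𝒥 : Type*} {S : 𝒥 → Type*}
    (T : Set (CAE 𝒥 S)) (Jrel JCL : Set 𝒥)
    (hdisj : Disjoint Jrel JCL)
    (hCL : Disjoint JCL (sideEffects T Jrel)) :
    ∀ x ∈ T, (∃ j ∈ Jrel, Affects x j) → ∀ j ∈ JCL, x.eff j = id := by
  intro x hx hrel j hj
  by_contra h
  have hnotrel : j ∉ Jrel := fun hr => hdisj.ne_of_mem hr hj rfl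
  have : j ∈ sideEffects T Jrel := ⟨hnotrel, x, hx, hrel, h⟩
  exact hCL.ne_of_mem hj this rfl
end

section
/- Suppose every CAE triple either affects no fluent in J_rel or affects no fluent in J_CL, and all triples affecting J_rel have preconditions of the form C_rel ∧ C_CL where C_CL depends only on J_CL fluents and holds whenever the J_CL fluents equal their initial values. Then for any executable concrete trace from s₀, replacing every non-affecting action (one with identity effect on all J_rel fluents) by a no-op yields a trace that is also executable from s₀ and induces the same sequence of projections onto J_rel at each affecting step. -/
variable {𝒥 : Type*} {S : 𝒥 → Type*}

/-- Applying a CAE triple to a state. -/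
def applyCAE (x : CAE 𝒥 S) (s : PState 𝒥 S) : PState 𝒥 S := fun j => x.eff j (s j)

/-- State reached after applying the first `n` CAE triples of `xs` starting from `s0`. -/
def stateAt (s0 : PState 𝒥 S) (xs : ℕ → CAE 𝒥 S) : ℕ → PState 𝒥 S
  | 0 => s0
  | n + 1 => applyCAE (xs n) (stateAt s0 xs n)

/-- A no-op: trivially true precondition and identity effects. -/
def noop : CAE 𝒥 S := ⟨fun _ => True, fun _ => id⟩

/-- A CAE triple affects some fluent in `J` (effect not the identity on it). -/
def AffectsIn (x : CAE 𝒥 S) (J : Set 𝒥) : Prop := ∃ j ∈ J, x.eff j ≠ id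

open Classical in
/-- The modified trace: every triple not affecting `Jrel` is replaced by a no-op. -/
noncomputable def modTrace (Jrel : Set 𝒥) (xs : ℕ → CAE 𝒥 S) : ℕ → CAE 𝒥 S :=
  fun i => if AffectsIn (xs i) Jrel then xs i else noop

/-- A predicate on states depends only on the fluents in `J`. -/
def DependsOnly (J : Set 𝒥) (P : PState 𝒥 S → Prop) : Prop :=
  ∀ s s' : PState 𝒥 S, (∀ j ∈ J, s j = s' j) → (P s ↔ P s')

/-- Replacing every non-`Jrel`-affecting triple with a no-op yields a trace that is
also executable from `s0` and induces the same sequence of `Jrel`-projections. -/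
theorem scoped_modified_trace_executable_and_faithful
    (Jrel JCL : Set 𝒥) (s0 : PState 𝒥 S) (xs : ℕ → CAE 𝒥 S) (n : ℕ)
    (h1 : ∀ i < n, ¬ AffectsIn (xs i) Jrel ∨ ¬ AffectsIn (xs i) JCL)
    (h2 : ∀ i < n, AffectsIn (xs i) Jrel →
      ∃ Crel CCL : PState 𝒥 S → Prop,
        (∀ s, (xs i).pre s ↔ Crel s ∧ CCL s) ∧
        DependsOnly Jrel Crel ∧ DependsOnly JCL CCL ∧
        (∀ s, (∀ j ∈ JCL, s j = s0 j) → CCL s))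
    (hexec : ∀ i < n, (xs i).pre (stateAt s0 xs i)) :
    (∀ i < n, (modTrace Jrel xs i).pre (stateAt s0 (modTrace Jrel xs) i)) ∧
    (∀ i ≤ n, ∀ j ∈ Jrel, stateAt s0 (modTrace Jrel xs) i j = stateAt s0 xs i j) := by
  classical
  -- Jrel projections agree at every step (no bound needed)
  have hA : ∀ i, ∀ j ∈ Jrel, stateAt s0 (modTrace Jrel xs) i j = stateAt s0 xs i j := by
    intro i
    induction i with
    | zero => intro j _; rfl
    | succ i ih =>
      intro j hj
      by_cases h : AffectsIn (xs i) Jrel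
      · simp only [stateAt, applyCAE, modTrace, if_pos h, ih j hj]
      · have hid : (xs i).eff j = id := by
          by_contra hne
          exact h ⟨j, hj, hne⟩
        simp only [stateAt, applyCAE, modTrace, if_neg h, noop, hid, id, ih j hj]
  -- JCL fluents stay at s0 along the modified trace (up to n)
  have hB : ∀ i ≤ n, ∀ j ∈ JCL, stateAt s0 (modTrace Jrel xs) i j = s0 j := by
    intro i
    induction i with
    | zero => intro _ j _; rfl
    | succ i ih =>
      intro hi j hj
      have hi' : i < n := lt_of_lt_of_le (Nat.lt_succ_self i) hi
      have ihx := ih (le_of_lt hi') j hj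
      by_cases h : AffectsIn (xs i) Jrel
      · have hcl : ¬ AffectsIn (xs i) JCL := (h1 i hi').resolve_left (not_not_intro h)
        have hid : (xs i).eff j = id := by
          by_contra hne
          exact hcl ⟨j, hj, hne⟩
        simp only [stateAt, applyCAE, modTrace, if_pos h, hid, id, ihx]
      · simp only [stateAt, applyCAE, modTrace, if_neg h, noop, id, ihx]
  refine ⟨?_, fun i _ => hA i⟩
  intro i hi
  by_cases h : AffectsIn (xs i) Jrel
  · obtain ⟨Crel, CCL, hpre, hdrel, hdcl, hccl⟩ := h2 i hi h
    have hp := (hpre _).mp (hexec i hi)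
    have hcrel : Crel (stateAt s0 (modTrace Jrel xs) i) :=
      (hdrel _ _ (hA i)).mpr hp.1
    have hc : CCL (stateAt s0 (modTrace Jrel xs) i) := hccl _ (hB i (le_of_lt hi))
    simp only [modTrace, if_pos h]
    exact (hpre _).mpr ⟨hcrel, hc⟩
  · simp only [modTrace, if_neg h, noop]
end

section
/- If no CAE triple that affects any fluent in J_rel also affects any fluent in J_CL, and only triples affecting J_rel are replaced (all others by no-ops), then at every step i of the modified trace, the J_CL-projection of the current state equals the J_CL-projection of the initial state, i.e., causally-linked fluents retain their initial values. -/
variable {𝒥 : Type*} {S : 𝒥 → Type*}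

/-- If no CAE triple affecting `Jrel` also affects `JCL`, then along the modified trace
(non-`Jrel`-affecting triples replaced by no-ops), every causally-linked fluent retains
its initial value at every step. -/
theorem causally_linked_fluents_retain_initial_values
    (Jrel JCL : Set 𝒥) (s0 : PState 𝒥 S) (xs : ℕ → CAE 𝒥 S) (n : ℕ)
    (h1 : ∀ i < n, ¬ (AffectsIn (xs i) Jrel ∧ AffectsIn (xs i) JCL)) :
    ∀ i ≤ n, ∀ j ∈ JCL, stateAt s0 (modTrace Jrel xs) i j = s0 j := by
  intro i hi
  induction i with
  | zero => intro j _; rfl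
  | succ k ih =>
    intro j hj
    have ihk := ih (Nat.le_of_succ_le hi) j hj
    show applyCAE (modTrace Jrel xs k) (stateAt s0 (modTrace Jrel xs) k) j = s0 j
    unfold applyCAE modTrace
    by_cases h : AffectsIn (xs k) Jrel
    · simp only [h, if_true]
      have hnc : ¬ AffectsIn (xs k) JCL := fun hc =>
        h1 k (Nat.lt_of_succ_le hi) ⟨h, hc⟩
      have : (xs k).eff j = id := by
        by_contra hne
        exact hnc ⟨j, hj, hne⟩
      rw [this]; exact ihk
    · simp only [h, if_false]; exact ihk
end

section
/- Soundness of scoped RPPs: for any sequence of quotient CAE triples executable in the reduced planning problem from π_J(s₀), there exists a sequence of concrete CAE triples (one chosen from each equivalence class) such that both sequences induce the same sequence of states in S[J], i.e., the projection onto J of the concrete trajectory equals the abstract trajectory. -/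
variable {𝒥 : Type*} {S : 𝒥 → Type*}

/-- Soundness of scoped RPPs: an executable sequence of quotient CAE triples (equivalence
classes `Xs i` of concrete CAEs agreeing on their `J`-effects) from the projection of `s0`
lifts to a sequence of concrete CAE triples (one representative from each class) that is
executable from `s0` and induces the same sequence of states on the `J` fluents. -/
theorem scoped_rpp_sound
    (J : Set 𝒥) (s0 : PState 𝒥 S) (n : ℕ) (Xs : ℕ → Set (CAE 𝒥 S))
    (hne : ∀ i < n, (Xs i).Nonempty)
    (hagree : ∀ i < n, ∀ x ∈ Xs i, ∀ x' ∈ Xs i, ∀ j ∈ J, x.eff j = x'.eff j)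
    -- abstract trajectory, recorded on the `J` fluents of the states `as i`
    (as : ℕ → PState 𝒥 S)
    (h0 : ∀ j ∈ J, as 0 j = s0 j)
    (hstep : ∀ i < n, ∀ x ∈ Xs i, ∀ j ∈ J, as (i + 1) j = x.eff j (as i j))
    -- abstract executability: the quotient precondition (disjunction over the class) is
    -- witnessed on any concrete state agreeing with the abstract state on `J`
    (hexec : ∀ i < n, ∀ s : PState 𝒥 S, (∀ j ∈ J, s j = as i j) → ∃ x ∈ Xs i, x.pre s) :
    ∃ xs : ℕ → CAE 𝒥 S,
      (∀ i < n, xs i ∈ Xs i) ∧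
      (∀ i < n, (xs i).pre (stateAt s0 xs i)) ∧
      (∀ i ≤ n, ∀ j ∈ J, stateAt s0 xs i j = as i j) := by

  classical
  set pick : ℕ → PState 𝒥 S → CAE 𝒥 S := fun i s =>
    if h : ∃ x ∈ Xs i, x.pre s then h.choose else noop with hpick
  set st : ℕ → PState 𝒥 S :=
    fun i => Nat.rec s0 (fun i s => applyCAE (pick i s) s) i with hstdef
  set xs : ℕ → CAE 𝒥 S := fun i => pick i (st i) with hxs
  have hstsucc : ∀ i, st (i + 1) = applyCAE (xs i) (st i) := fun i => rfl
  have hst : ∀ i, stateAt s0 xs i = st i := by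
    intro i
    induction i with
    | zero => rfl
    | succ i ih => rw [stateAt, ih, hstsucc]
  -- key invariant
  have key : ∀ i ≤ n, ∀ j ∈ J, st i j = as i j := by
    intro i
    induction i with
    | zero => intro _ j hj; exact (h0 j hj).symm
    | succ i ih =>
      intro hin j hj
      have hi : i < n := Nat.lt_of_succ_le hin
      have hagr := ih (le_of_lt hi)
      have hex : ∃ x ∈ Xs i, x.pre (st i) := hexec i hi (st i) hagr
      have hxi : xs i = hex.choose := by
        simp only [hxs, hpick, dif_pos hex]
      have hmem : xs i ∈ Xs i := hxi ▸ hex.choose_spec.1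
      rw [hstsucc]
      have : as (i + 1) j = (xs i).eff j (as i j) := hstep i hi (xs i) hmem j hj
      rw [this]
      show (xs i).eff j (st i j) = (xs i).eff j (as i j)
      rw [hagr j hj]
  have hmem : ∀ i < n, xs i ∈ Xs i := by
    intro i hi
    have hex : ∃ x ∈ Xs i, x.pre (st i) := hexec i hi (st i) (key i (le_of_lt hi))
    have hxi : xs i = hex.choose := by simp only [hxs, hpick, dif_pos hex]
    exact hxi ▸ hex.choose_spec.1
  refine ⟨xs, hmem, ?_, fun i hin j hj => (hst i ▸ key i hin j hj)⟩
  intro i hi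
  have hex : ∃ x ∈ Xs i, x.pre (st i) := hexec i hi (st i) (key i (le_of_lt hi))
  have hxi : xs i = hex.choose := by simp only [hxs, hpick, dif_pos hex]
  rw [hst i, hxi]
  exact hex.choose_spec.2
end

section
/- If each fluent mentioned in the goal condition G lies in J_rel ∪ J_CL, every concrete trace reaching G can be transformed (by replacing non-affecting actions with no-ops) into a trace of the reduced problem of equal length that also reaches G; hence if the original problem is solvable, the scoped RPP has a plan of the same cost, assuming no-ops cost no more than the replaced actions. -/
variable {𝒥 : Type*} {S : 𝒥 → Type*}

lemma not_affects_eff {x : CAE 𝒥 S} {J : Set 𝒥} (h : ¬ AffectsIn x J)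
    {j : 𝒥} (hj : j ∈ J) : x.eff j = id := by
  by_contra hc
  exact h ⟨j, hj, hc⟩

/-- The modified trace agrees with the original trace on `Jrel`. -/
lemma mod_agrees_rel (Jrel : Set 𝒥) (s0 : PState 𝒥 S) (xs : ℕ → CAE 𝒥 S) :
    ∀ i, ∀ j ∈ Jrel, stateAt s0 (modTrace Jrel xs) i j = stateAt s0 xs i j := by
  intro i
  induction i with
  | zero => intro j _; rfl
  | succ k ih =>
    intro j hj
    by_cases h : AffectsIn (xs k) Jrel
    · simp only [stateAt, applyCAE, modTrace, if_pos h, ih j hj]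
    · simp only [stateAt, applyCAE, modTrace, if_neg h, noop, id_eq,
        not_affects_eff h hj, ih j hj]

/-- The modified trace keeps `JCL` fluents at their initial values. -/
lemma mod_agrees_CL (Jrel JCL : Set 𝒥) (s0 : PState 𝒥 S) (xs : ℕ → CAE 𝒥 S) (n : ℕ)
    (ha : ∀ i < n, ¬ (AffectsIn (xs i) Jrel ∧ AffectsIn (xs i) JCL)) :
    ∀ i ≤ n, ∀ j ∈ JCL, stateAt s0 (modTrace Jrel xs) i j = s0 j := by
  intro i
  induction i with
  | zero => intro _ j _; rfl
  | succ k ih =>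
    intro hk j hj
    have hk' : k < n := hk
    by_cases h : AffectsIn (xs k) Jrel
    · have hnCL : ¬ AffectsIn (xs k) JCL := fun hc => ha k hk' ⟨h, hc⟩
      simp only [stateAt, applyCAE, modTrace, if_pos h, not_affects_eff hnCL hj, id_eq,
        ih (le_of_lt hk') j hj]
    · simp only [stateAt, applyCAE, modTrace, if_neg h, noop, id_eq,
        ih (le_of_lt hk') j hj]

/-- Completeness: if every goal fluent lies in `Jrel ∪ JCL` (the goal decomposes as a
`Jrel`-conjunct and a `JCL`-conjunct true in `s0`), every concrete trace reaching the goal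
transforms, by replacing non-affecting actions with no-ops, into an equal-length trace of
the scoped problem that is executable, reaches the goal, and costs no more (assuming
no-ops cost no more than the actions they replace). -/
theorem scoped_rpp_complete_goal_reaching
    (Jrel JCL : Set 𝒥) (s0 : PState 𝒥 S) (xs : ℕ → CAE 𝒥 S) (n : ℕ)
    (cost : CAE 𝒥 S → ℝ) (hnonneg : ∀ x, 0 ≤ cost x)
    (ha : ∀ i < n, ¬ (AffectsIn (xs i) Jrel ∧ AffectsIn (xs i) JCL))
    (hb : ∀ i < n, AffectsIn (xs i) Jrel →
      ∃ Crel CCL : PState 𝒥 S → Prop,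
        (∀ s, (xs i).pre s ↔ Crel s ∧ CCL s) ∧
        DependsOnly Jrel Crel ∧ DependsOnly JCL CCL ∧
        (∀ s, (∀ j ∈ JCL, s j = s0 j) → CCL s))
    (Grel GCL : PState 𝒥 S → Prop)
    (hGrel : DependsOnly Jrel Grel) (hGCL : DependsOnly JCL GCL) (hGCL0 : GCL s0)
    (hcostNoop : ∀ i < n, ¬ AffectsIn (xs i) Jrel → cost (noop : CAE 𝒥 S) ≤ cost (xs i))
    (hexec : ∀ i < n, (xs i).pre (stateAt s0 xs i))
    (hgoal : Grel (stateAt s0 xs n) ∧ GCL (stateAt s0 xs n)) :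
    (∀ i < n, (modTrace Jrel xs i).pre (stateAt s0 (modTrace Jrel xs) i)) ∧
    (Grel (stateAt s0 (modTrace Jrel xs) n) ∧ GCL (stateAt s0 (modTrace Jrel xs) n)) ∧
    (∑ i ∈ Finset.range n, cost (modTrace Jrel xs i) ≤ ∑ i ∈ Finset.range n, cost (xs i)) := by
  have hrel := mod_agrees_rel Jrel s0 xs
  have hCL := mod_agrees_CL Jrel JCL s0 xs n ha
  refine ⟨?_, ⟨?_, ?_⟩, ?_⟩
  · intro i hi
    by_cases h : AffectsIn (xs i) Jrel
    · obtain ⟨Crel, CCL, hiff, hdrel, hdCL, hCL0⟩ := hb i hi h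
      have hpre := hexec i hi
      have hCrel : Crel (stateAt s0 xs i) := ((hiff _).mp hpre).1
      have hCrel' : Crel (stateAt s0 (modTrace Jrel xs) i) :=
        (hdrel _ _ (hrel i)).mpr hCrel
      have hCCL' : CCL (stateAt s0 (modTrace Jrel xs) i) :=
        hCL0 _ (hCL i (le_of_lt hi))
      simpa only [modTrace, if_pos h] using (hiff _).mpr ⟨hCrel', hCCL'⟩
    · simp only [modTrace, if_neg h, noop]
  · exact (hGrel _ _ (hrel n)).mpr hgoal.1
  · exact (hGCL _ _ (hCL n le_rfl)).mpr hGCL0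
  · refine Finset.sum_le_sum fun i hi => ?_
    rw [Finset.mem_range] at hi
    by_cases h : AffectsIn (xs i) Jrel
    · simp [modTrace, if_pos h]
    · simpa only [modTrace, if_neg h] using hcostNoop i hi h
end

section
/- Under the hypotheses of the scoped-RPP completeness theorem, the modified trace (non-affecting actions replaced by no-ops) satisfies: for every index i, the projection of its i-th state onto J_rel equals the projection of the original trace's i-th state onto J_rel. -/
variable {𝒥 : Type*} {S : 𝒥 → Type*}

/-- Under the scoped-RPP completeness hypotheses, the modified trace (non-affecting
actions replaced by no-ops) agrees with the original trace on the `Jrel` projection at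
every index, and its `JCL`-values always equal those of `s0`. -/
theorem modified_trace_agrees_on_Jrel
    (Jrel JCL : Set 𝒥) (s0 : PState 𝒥 S) (xs : ℕ → CAE 𝒥 S) (n : ℕ)
    (ha : ∀ i < n, ¬ (AffectsIn (xs i) Jrel ∧ AffectsIn (xs i) JCL))
    (hb : ∀ i < n, AffectsIn (xs i) Jrel →
      ∃ Crel CCL : PState 𝒥 S → Prop,
        (∀ s, (xs i).pre s ↔ Crel s ∧ CCL s) ∧
        DependsOnly Jrel Crel ∧ DependsOnly JCL CCL ∧
        (∀ s, (∀ j ∈ JCL, s j = s0 j) → CCL s))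
    (hexec : ∀ i < n, (xs i).pre (stateAt s0 xs i)) :
    ∀ i ≤ n,
      (∀ j ∈ Jrel, stateAt s0 (modTrace Jrel xs) i j = stateAt s0 xs i j) ∧
      (∀ j ∈ JCL, stateAt s0 (modTrace Jrel xs) i j = s0 j) := by
  intro i
  induction i with
  | zero => intro _; exact ⟨fun _ _ => rfl, fun _ _ => rfl⟩
  | succ i ih =>
    intro hi
    obtain ⟨IH1, IH2⟩ := ih (Nat.le_of_succ_le hi)
    by_cases haff : AffectsIn (xs i) Jrel
    · have hnCL : ¬ AffectsIn (xs i) JCL := fun h =>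
        ha i (Nat.lt_of_succ_le hi) ⟨haff, h⟩
      constructor
      · intro j hj
        simp only [stateAt, applyCAE, modTrace, if_pos haff, IH1 j hj]
      · intro j hj
        have hid : (xs i).eff j = id := by
          by_contra h; exact hnCL ⟨j, hj, h⟩
        simp only [stateAt, applyCAE, modTrace, if_pos haff, hid, id_eq, IH2 j hj]
    · have hid : ∀ j ∈ Jrel, (xs i).eff j = id := by
        intro j hj; by_contra h; exact haff ⟨j, hj, h⟩
      constructor
      · intro j hj
        simp only [stateAt, applyCAE, modTrace, if_neg haff, noop, hid j hj, id_eq,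
          IH1 j hj]
      · intro j hj
        simp only [stateAt, applyCAE, modTrace, if_neg haff, noop, id_eq, IH2 j hj]
end
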